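/- arXiv:2108.05261 — 2 statements merged into one kernel-verified Lean document; each statement's English description precedes it below -/
import Mathlib

section
/- For the distributed-order kernel k(t) = ∫₀¹ t^{α-1}/Γ(α) dα, the Laplace transform K(λ) = ∫₀^∞ e^{-λt} k(t) dt equals (λ-1)/(λ log λ) for all λ > 0, λ ≠ 1. -/
/-! Each Riemann–Liouville kernel `t ^ (a - 1) / Γ(a)` has Laplace transform `λ ^ (-a)`.
The integrand is nonnegative and `a ↦ λ ^ (-a)` is integrable on `(0, 1]`, so Fubini lets us
integrate over `t` first, leaving `∫₀¹ λ ^ (-a) da = (1 - λ⁻¹) / log λ`. -/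

open MeasureTheory Real Set

namespace DistributedOrder

noncomputable def laplaceIntegrand (l : ℝ) (p : ℝ × ℝ) : ℝ :=
  exp (-l * p.1) * (p.1 ^ (p.2 - 1) / Gamma p.2)

variable {l : ℝ}

lemma laplaceIntegrand_nonneg {p : ℝ × ℝ} (ht : 0 ≤ p.1) (ha : 0 ≤ p.2) :
    0 ≤ laplaceIntegrand l p :=
  mul_nonneg (exp_pos _).le (div_nonneg (rpow_nonneg ht _) (Gamma_nonneg_of_nonneg ha))

lemma continuousOn_laplaceIntegrand :
    ContinuousOn (laplaceIntegrand l) (Ioi 0 ×ˢ Ioi 0) := by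
  rintro ⟨t, a⟩ ⟨ht, ha⟩
  refine ContinuousAt.continuousWithinAt ?_
  have hGamma : ContinuousAt (fun p : ℝ × ℝ => Gamma p.2) (t, a) :=
    (differentiableAt_Gamma fun m => ((neg_nonpos.mpr m.cast_nonneg).trans_lt ha).ne')
      |>.continuousAt.comp continuousAt_snd
  exact (continuous_exp.comp (continuous_const.mul continuous_fst)).continuousAt.mul
    ((continuousAt_fst.rpow (continuousAt_snd.sub continuousAt_const) (Or.inl ht.ne')).div
      hGamma (Gamma_pos_of_pos ha).ne')

theorem integral_rpow_neg_zero_one (hl : 0 < l) (hne : l ≠ 1) :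
    ∫ a in (0 : ℝ)..1, l ^ (-a) = (l - 1) / (l * log l) := by
  have hlog : log l ≠ 0 := log_ne_zero_of_pos_of_ne_one hl hne
  calc ∫ a in (0 : ℝ)..1, l ^ (-a)
      = ∫ a in (0 : ℝ)..1, exp (a * -log l) := by
        refine intervalIntegral.integral_congr fun a _ => ?_
        simp only [rpow_def_of_pos hl]
        ring_nf
    _ = (l - 1) / (l * log l) := by
        rw [intervalIntegral.integral_comp_mul_right exp (neg_ne_zero.mpr hlog)]
        simp only [zero_mul, one_mul, smul_eq_mul, integral_exp, exp_neg, exp_log hl, exp_zero]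
        field_simp
        ring

section

variable (hl : 0 < l)
include hl

lemma integrableOn_laplaceIntegrand {a : ℝ} (ha : 0 < a) :
    IntegrableOn (fun t => laplaceIntegrand l (t, a)) (Ioi 0) := by
  have h := integrableOn_rpow_mul_exp_neg_mul_rpow (s := a - 1) (by linarith) zero_lt_one hl
  simp only [rpow_one] at h
  refine IntegrableOn.congr_fun (h.const_mul (Gamma a)⁻¹) (fun t _ => ?_) measurableSet_Ioi
  simp only [laplaceIntegrand, div_eq_mul_inv, neg_mul]
  ring

lemma integral_laplaceIntegrand {a : ℝ} (ha : 0 < a) :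
    ∫ t in Ioi 0, laplaceIntegrand l (t, a) = l ^ (-a) := by
  have hGamma : Gamma a ≠ 0 := (Gamma_pos_of_pos ha).ne'
  calc ∫ t in Ioi 0, laplaceIntegrand l (t, a)
      = (Gamma a)⁻¹ * ∫ t in Ioi 0, t ^ (a - 1) * exp (-(l * t)) := by
        rw [← integral_const_mul]
        refine setIntegral_congr_fun measurableSet_Ioi fun t _ => ?_
        simp only [laplaceIntegrand, neg_mul]
        ring
    _ = l ^ (-a) := by
        rw [integral_rpow_mul_exp_neg_mul_Ioi ha hl, one_div, inv_rpow hl.le, ← rpow_neg hl.le]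
        field_simp

lemma integrable_laplaceIntegrand (b : ℝ) :
    Integrable (laplaceIntegrand l)
      ((volume.restrict (Ioi 0)).prod (volume.restrict (Ioc 0 b))) := by
  have hmeas : AEStronglyMeasurable (laplaceIntegrand l)
      ((volume.restrict (Ioi 0)).prod (volume.restrict (Ioc 0 b))) := by
    rw [Measure.prod_restrict]
    exact (continuousOn_laplaceIntegrand.mono (prod_mono le_rfl Ioc_subset_Ioi_self))
      |>.aestronglyMeasurable (measurableSet_Ioi.prod measurableSet_Ioc)
  refine (integrable_prod_iff' hmeas).mpr ⟨?_, ?_⟩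
  · filter_upwards [ae_restrict_mem measurableSet_Ioc] with a ha
    exact integrableOn_laplaceIntegrand hl ha.1
  · have hnorm : ∀ᵐ a ∂(volume.restrict (Ioc 0 b)),
        l ^ (-a) = ∫ t in Ioi 0, ‖laplaceIntegrand l (t, a)‖ := by
      filter_upwards [ae_restrict_mem measurableSet_Ioc] with a ha
      rw [← integral_laplaceIntegrand hl ha.1]
      refine setIntegral_congr_fun measurableSet_Ioi fun t ht => ?_
      exact (norm_of_nonneg (laplaceIntegrand_nonneg (p := (t, a)) (le_of_lt ht) ha.1.le)).symm
    refine Integrable.congr ?_ hnorm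
    exact (continuous_const_rpow hl.ne').comp continuous_neg |>.integrableOn_Ioc

theorem integral_exp_mul_integral_rpow_div_Gamma {b : ℝ} (hb : 0 ≤ b) :
    ∫ t in Ioi 0, exp (-l * t) * ∫ a in (0 : ℝ)..b, t ^ (a - 1) / Gamma a =
      ∫ a in (0 : ℝ)..b, l ^ (-a) := by
  calc ∫ t in Ioi 0, exp (-l * t) * ∫ a in (0 : ℝ)..b, t ^ (a - 1) / Gamma a
      = ∫ t in Ioi 0, ∫ a in Ioc 0 b, laplaceIntegrand l (t, a) := by
        refine setIntegral_congr_fun measurableSet_Ioi fun t _ => ?_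
        rw [intervalIntegral.integral_of_le hb, ← integral_const_mul]
        rfl
    _ = ∫ a in Ioc 0 b, ∫ t in Ioi 0, laplaceIntegrand l (t, a) :=
        integral_integral_swap (f := fun t a => laplaceIntegrand l (t, a))
          (integrable_laplaceIntegrand hl b)
    _ = ∫ a in (0 : ℝ)..b, l ^ (-a) := by
        rw [intervalIntegral.integral_of_le hb]
        exact setIntegral_congr_fun measurableSet_Ioc fun a ha =>
          integral_laplaceIntegrand hl ha.1

end

end DistributedOrder

open DistributedOrder in
theorem distributed_order_kernel_laplace (l : ℝ) (hl : 0 < l) (hne : l ≠ 1) :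
    ∫ t in Set.Ioi (0:ℝ),
        Real.exp (-l * t) * ∫ a in (0:ℝ)..1, t ^ (a - 1) / Real.Gamma a =
      (l - 1) / (l * Real.log l) := by
  rw [integral_exp_mul_integral_rpow_div_Gamma hl zero_le_one, integral_rpow_neg_zero_one hl hne]
end

section
/- Under the dissipativity condition b(x)·(x - x₀) ≤ -c|x - x₀|², if f : ℝ^d → ℝ is β-Hölder with constant C (0 < β ≤ 1), then u(t,x) := f(X(t;x)) satisfies |u(t,x) - f(x₀)| ≤ C|x - x₀|^β e^{-cβt} for all t ≥ 0 and x ∈ ℝ^d. -/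
/-!
Along the flow, `u(s) = X(s;x) - x₀` satisfies `⟪u', u⟫ ≤ -c‖u‖²`, so `‖u(s)‖² e^{2cs}` is
antitone and `‖X(t;x) - x₀‖ ≤ ‖x - x₀‖ e^{-ct}`. The Hölder bound at `x₀` turns this into the
decay `C ‖x - x₀‖^β e^{-cβt}`.
-/

open Real InnerProductSpace

section Dissipative

variable {E : Type*} [NormedAddCommGroup E] [InnerProductSpace ℝ E]
  {u u' : ℝ → E} {c : ℝ}

theorem antitone_norm_sq_mul_exp_of_inner_deriv_le (hu : ∀ s, HasDerivAt u (u' s) s)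
    (hdiss : ∀ s, ⟪u' s, u s⟫_ℝ ≤ -c * ‖u s‖ ^ 2) :
    Antitone fun s => ‖u s‖ ^ 2 * exp (2 * c * s) := by
  refine antitone_of_hasDerivAt_nonpos
    (fun s => (hu s).norm_sq.mul (((hasDerivAt_id' s).const_mul (2 * c)).exp)) fun s => ?_
  have hinner : ⟪u s, u' s⟫_ℝ ≤ -c * ‖u s‖ ^ 2 := real_inner_comm (u' s) (u s) ▸ hdiss s
  have hexp : 0 < exp (2 * c * s) := exp_pos _
  show _ ≤ 0
  nlinarith

theorem norm_le_mul_exp_of_inner_deriv_le (hu : ∀ s, HasDerivAt u (u' s) s)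
    (hdiss : ∀ s, ⟪u' s, u s⟫_ℝ ≤ -c * ‖u s‖ ^ 2) {t₀ t : ℝ} (ht : t₀ ≤ t) :
    ‖u t‖ ≤ ‖u t₀‖ * exp (-c * (t - t₀)) := by
  have hmono : ‖u t‖ ^ 2 * exp (2 * c * t) ≤ ‖u t₀‖ ^ 2 * exp (2 * c * t₀) :=
    antitone_norm_sq_mul_exp_of_inner_deriv_le hu hdiss ht
  refine le_of_sq_le_sq ?_ (by positivity)
  have hsplit : exp (2 * c * t₀) = exp (-c * (t - t₀)) ^ 2 * exp (2 * c * t) := by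
    rw [← exp_nat_mul, ← exp_add]; ring_nf
  rw [hsplit, ← mul_assoc, ← mul_pow] at hmono
  exact le_of_mul_le_mul_right hmono (exp_pos _)

end Dissipative

theorem holder_decay_of_solution_general {d : ℕ}
    (b : EuclideanSpace ℝ (Fin d) → EuclideanSpace ℝ (Fin d))
    (x₀ : EuclideanSpace ℝ (Fin d)) (c : ℝ)
    (hdiss : ∀ x, (inner ℝ (b x) (x - x₀) : ℝ) ≤ -c * ‖x - x₀‖ ^ 2)
    (f : EuclideanSpace ℝ (Fin d) → ℝ) (C β : ℝ) (hC : 0 < C) (hβ0 : 0 < β)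
    (hf : ∀ x y, |f x - f y| ≤ C * ‖x - y‖ ^ β)
    (X : EuclideanSpace ℝ (Fin d) → ℝ → EuclideanSpace ℝ (Fin d))
    (hX0 : ∀ x, X x 0 = x) (hflow : ∀ x t, HasDerivAt (X x) (b (X x t)) t) :
    ∀ t : ℝ, 0 ≤ t → ∀ x,
      |f (X x t) - f x₀| ≤ C * ‖x - x₀‖ ^ β * Real.exp (-c * β * t) := by
  intro t ht x
  have hdecay : ‖X x t - x₀‖ ≤ ‖x - x₀‖ * exp (-c * t) := by
    simpa [hX0] using norm_le_mul_exp_of_inner_deriv_le (u := fun s => X x s - x₀)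
      (fun s => (hflow x s).sub_const x₀) (fun s => hdiss (X x s)) ht
  calc |f (X x t) - f x₀| ≤ C * ‖X x t - x₀‖ ^ β := hf _ _
    _ ≤ C * (‖x - x₀‖ * exp (-c * t)) ^ β := by gcongr
    _ = C * ‖x - x₀‖ ^ β * exp (-c * β * t) := by
      rw [mul_rpow (norm_nonneg _) (exp_pos _).le, ← exp_mul]
      ring_nf

theorem holder_decay_of_solution {d : ℕ}
    (b : EuclideanSpace ℝ (Fin d) → EuclideanSpace ℝ (Fin d)) (hb : Continuous b)
    (x₀ : EuclideanSpace ℝ (Fin d)) (c : ℝ) (hc : 0 < c)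
    (hdiss : ∀ x, (inner ℝ (b x) (x - x₀) : ℝ) ≤ -c * ‖x - x₀‖ ^ 2)
    (f : EuclideanSpace ℝ (Fin d) → ℝ) (C β : ℝ) (hC : 0 < C) (hβ0 : 0 < β) (hβ1 : β ≤ 1)
    (hf : ∀ x y, |f x - f y| ≤ C * ‖x - y‖ ^ β)
    (X : EuclideanSpace ℝ (Fin d) → ℝ → EuclideanSpace ℝ (Fin d))
    (hX0 : ∀ x, X x 0 = x) (hflow : ∀ x t, HasDerivAt (X x) (b (X x t)) t) :
    ∀ t : ℝ, 0 ≤ t → ∀ x,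
      |f (X x t) - f x₀| ≤ C * ‖x - x₀‖ ^ β * Real.exp (-c * β * t) :=
  holder_decay_of_solution_general b x₀ c hdiss f C β hC hβ0 hf X hX0 hflow
end
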